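/- Fix an integer m ≥ 2. The map ψ defined on finite simple graphs by ψ(G) = (m−1)·η(G) is a (reg,m)-compatible map, i.e., it satisfies conditions (a), (b) and (c) of the definition of (reg,m)-compatibility. -/

import Mathlib

/-- A maximal clique of a simple graph: a clique that is maximal under inclusion. -/
def MaxClq {V : Type*} (G : SimpleGraph V) (s : Set V) : Prop :=
  G.IsClique s ∧ ∀ t : Set V, G.IsClique t → s ⊆ t → s = t

/-- An internal vertex: a vertex lying in at least two (distinct) maximal cliques. -/
def InternalVtx {V : Type*} (G : SimpleGraph V) (v : V) : Prop :=
  ∃ s t : Set V, MaxClq G s ∧ MaxClq G t ∧ s ≠ t ∧ v ∈ s ∧ v ∈ t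

/-- `iv G`: the number of internal vertices of `G`. -/
noncomputable def ivNum {V : Type*} (G : SimpleGraph V) : ℕ :=
  {v : V | InternalVtx G v}.ncard

/-- `c G`: the number of connected components of `G`. -/
noncomputable def compNum {V : Type*} (G : SimpleGraph V) : ℕ :=
  Nat.card G.ConnectedComponent

/-- `𝒞 G`: the number of maximal cliques of `G`. -/
noncomputable def maxClqNum {V : Type*} (G : SimpleGraph V) : ℕ :=
  {s : Set V | MaxClq G s}.ncard

/-- `ω G`: the clique number of `G`, the maximum size of a clique. -/
noncomputable def clqNum {V : Type*} (G : SimpleGraph V) : ℕ :=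
  sSup {k : ℕ | ∃ s : Set V, G.IsClique s ∧ s.ncard = k}

/-- A set of edges of `G` is clique-disjoint if no two distinct edges of it are both
contained in a single clique of `G`. -/
def CliqueDisjointEdges {V : Type*} (G : SimpleGraph V) (E : Set (Sym2 V)) : Prop :=
  E ⊆ G.edgeSet ∧ ∀ e ∈ E, ∀ f ∈ E, e ≠ f →
    ¬ ∃ s : Set V, G.IsClique s ∧ (∀ x ∈ e, x ∈ s) ∧ (∀ x ∈ f, x ∈ s)

/-- `η G`: the maximum cardinality of a clique-disjoint set of edges of `G`. -/
noncomputable def etaNum {V : Type*} (G : SimpleGraph V) : ℕ :=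
  sSup {k : ℕ | ∃ E : Set (Sym2 V), CliqueDisjointEdges G E ∧ E.ncard = k}

/-- `G_v`: the graph on the same vertex set as `G` whose edges are those of `G` together
with all edges between distinct neighbours of `v`. -/
def addNbrEdges {V : Type*} (G : SimpleGraph V) (v : V) : SimpleGraph V where
  Adj a b := G.Adj a b ∨ (a ≠ b ∧ G.Adj v a ∧ G.Adj v b)
  symm := by
    constructor
    intro a b h
    rcases h with h | ⟨hne, h1, h2⟩
    · exact Or.inl h.symm
    · exact Or.inr ⟨hne.symm, h2, h1⟩
  loopless := by
    constructor
    intro a h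
    rcases h with h | ⟨hne, _, _⟩
    · exact G.irrefl h
    · exact hne rfl

/-- A map `ψ` from finite simple graphs to `ℕ` is `(reg, m)`-compatible if:
(a) `ψ(Ĝ) ≤ ψ(G)` where `Ĝ` is obtained from `G` by deleting all isolated vertices;
(b) if every connected component of `G` is a complete graph on at least 2 vertices,
then `ψ(G) ≥ Σ_i min {m − 1, n_i − 1}` where the `n_i` are the component sizes;
(c) if some connected component of `G` is not complete, then there is an internal vertex
`v` with `ψ(G∖v) ≤ ψ(G)` and `ψ(G_v) < ψ(G)`, or with `ψ(G∖v) ≤ ψ(G)`,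
`ψ(G_v) = ψ(G)` and `ψ(G_v∖v) < ψ(G)`. -/
def RegCompatible (m : ℕ) (ψ : ∀ (V : Type) [Finite V], SimpleGraph V → ℕ) : Prop :=
  (∀ (V : Type) [Finite V] (G : SimpleGraph V),
      ψ _ (G.induce {u : V | ∃ w : V, G.Adj u w}) ≤ ψ V G) ∧
  (∀ (V : Type) [Finite V] (G : SimpleGraph V),
      (∀ u w : V, G.Reachable u w → u ≠ w → G.Adj u w) →
      (∀ u : V, ∃ w : V, u ≠ w ∧ G.Reachable u w) →
      ∑ᶠ c : G.ConnectedComponent, min (m - 1) (c.supp.ncard - 1) ≤ ψ V G) ∧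
  (∀ (V : Type) [Finite V] (G : SimpleGraph V),
      (∃ u w : V, u ≠ w ∧ G.Reachable u w ∧ ¬ G.Adj u w) →
      ∃ v : V, InternalVtx G v ∧
        ((ψ _ (G.induce {u : V | u ≠ v}) ≤ ψ V G ∧ ψ V (addNbrEdges G v) < ψ V G) ∨
          (ψ _ (G.induce {u : V | u ≠ v}) ≤ ψ V G ∧ ψ V (addNbrEdges G v) = ψ V G ∧
            ψ _ ((addNbrEdges G v).induce {u : V | u ≠ v}) < ψ V G)))

/-!
Clique-disjoint edge sets of an induced subgraph are clique-disjoint in the whole graph, so `η`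
does not increase when vertices are deleted. Choosing one edge in every component gives a
clique-disjoint set, so `η` is at least the number of components when there are no isolated
vertices.

If `v` has two non-adjacent neighbours `a` and `b`, take a clique-disjoint set `E` of `G_v`.
The closed neighbourhood `N[v]` is a clique of `G_v`, so at most one edge of `E` lies inside it;
the others are edges of `G` lying in no clique of `G` through `v`. Adding `va` and `vb` to them
gives a clique-disjoint set of `G` with `|E| + 1` edges, hence `η(G_v) < η(G)`.
-/

open SimpleGraph

variable {V W : Type*} {G H : SimpleGraph V}

lemma SimpleGraph.IsClique.reachable {s : Set V} (hs : G.IsClique s) {x y : V} (hx : x ∈ s)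
    (hy : y ∈ s) : G.Reachable x y := by
  obtain rfl | hxy := eq_or_ne x y
  exacts [Reachable.refl x, (hs hx hy hxy).reachable]

lemma subset_insert_neighborSet_of_isClique {s : Set V} (hs : G.IsClique s) {v : V}
    (hv : v ∈ s) : s ⊆ insert v (G.neighborSet v) := by
  intro x hx
  obtain rfl | hxv := eq_or_ne x v
  exacts [Set.mem_insert x _, Set.mem_insert_of_mem v (hs hv hx hxv.symm)]

lemma exists_maxClq_superset [Finite V] {c : Set V} (hc : G.IsClique c) :
    ∃ s, MaxClq G s ∧ c ⊆ s := by
  obtain ⟨s, hcs, hs⟩ := Finite.exists_le_maximal hc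
  exact ⟨s, ⟨hs.prop, fun t ht hst => hs.eq_of_le ht hst⟩, hcs⟩

lemma internalVtx_of_adj_of_adj [Finite V] {v a b : V} (ha : G.Adj v a) (hb : G.Adj v b)
    (hne : a ≠ b) (hab : ¬ G.Adj a b) : InternalVtx G v := by
  obtain ⟨s, hs, hvas⟩ := exists_maxClq_superset (isClique_pair.mpr fun _ => ha)
  obtain ⟨t, ht, hvbt⟩ := exists_maxClq_superset (isClique_pair.mpr fun _ => hb)
  refine ⟨s, t, hs, ht, ?_, hvas (Set.mem_insert v _), hvbt (Set.mem_insert v _)⟩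
  rintro rfl
  exact hab (hs.1 (hvas (Set.mem_insert_of_mem v rfl)) (hvbt (Set.mem_insert_of_mem v rfl)) hne)

lemma SimpleGraph.Reachable.exists_adj_adj_not_adj {u w : V} (h : G.Reachable u w) (hne : u ≠ w)
    (huw : ¬ G.Adj u w) : ∃ v a b, G.Adj v a ∧ G.Adj v b ∧ a ≠ b ∧ ¬ G.Adj a b := by
  obtain ⟨p⟩ := h
  induction p with
  | nil => exact absurd rfl hne
  | @cons u x w hux q ih =>
    by_cases hxw : G.Adj x w
    · exact ⟨x, u, w, hux.symm, hxw, hne, huw⟩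
    · exact ih (by rintro rfl; exact huw hux) hxw

lemma addNbrEdges_le (v : V) : G ≤ addNbrEdges G v :=
  fun _ _ h => Or.inl h

lemma isClique_addNbrEdges_insert_neighborSet (v : V) :
    (addNbrEdges G v).IsClique (insert v (G.neighborSet v)) := by
  rintro x (rfl | hx) y (rfl | hy) hxy
  · exact absurd rfl hxy
  · exact Or.inl hy
  · exact Or.inl (G.adj_symm hx)
  · exact Or.inr ⟨hxy, hx, hy⟩

section CliqueDisjointEdges

variable {E : Set (Sym2 V)}

lemma bddAbove_ncard_cliqueDisjointEdges [Finite V] (G : SimpleGraph V) :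
    BddAbove {k : ℕ | ∃ E : Set (Sym2 V), CliqueDisjointEdges G E ∧ E.ncard = k} :=
  ⟨Nat.card (Sym2 V), by rintro _ ⟨E, -, rfl⟩; exact Set.ncard_le_card E⟩

lemma cliqueDisjointEdges_empty (G : SimpleGraph V) : CliqueDisjointEdges G ∅ :=
  ⟨Set.empty_subset _, by simp⟩

lemma CliqueDisjointEdges.ncard_le_etaNum [Finite V] (hE : CliqueDisjointEdges G E) :
    E.ncard ≤ etaNum G :=
  le_csSup (bddAbove_ncard_cliqueDisjointEdges G) ⟨E, hE, rfl⟩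

lemma exists_cliqueDisjointEdges_ncard_eq_etaNum [Finite V] (G : SimpleGraph V) :
    ∃ E : Set (Sym2 V), CliqueDisjointEdges G E ∧ E.ncard = etaNum G :=
  Nat.sSup_mem (s := {k | ∃ E : Set (Sym2 V), CliqueDisjointEdges G E ∧ E.ncard = k})
    ⟨0, ∅, cliqueDisjointEdges_empty G, Set.ncard_empty _⟩ (bddAbove_ncard_cliqueDisjointEdges G)

lemma CliqueDisjointEdges.map {G' : SimpleGraph W} (φ : G' ↪g G) {E : Set (Sym2 W)}
    (hE : CliqueDisjointEdges G' E) : CliqueDisjointEdges G (Sym2.map φ '' E) := by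
  refine ⟨?_, ?_⟩
  · rintro _ ⟨e, he, rfl⟩
    exact φ.map_mem_edgeSet_iff.mpr (hE.1 he)
  · rintro _ ⟨e, he, rfl⟩ _ ⟨f, hf, rfl⟩ hne ⟨s, hs, hes, hfs⟩
    refine hE.2 e he f hf (by rintro rfl; exact hne rfl) ⟨φ ⁻¹' s, ?_, ?_, ?_⟩
    · exact fun x hx y hy hxy => φ.map_adj_iff.mp (hs hx hy (φ.injective.ne hxy))
    · exact fun x hx => hes _ (Sym2.mem_map.mpr ⟨x, hx, rfl⟩)
    · exact fun x hx => hfs _ (Sym2.mem_map.mpr ⟨x, hx, rfl⟩)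

lemma CliqueDisjointEdges.of_le_of_subset (hGH : G ≤ H) (hE : CliqueDisjointEdges H E)
    {F : Set (Sym2 V)} (hFE : F ⊆ E) (hFG : F ⊆ G.edgeSet) : CliqueDisjointEdges G F :=
  ⟨hFG, fun e he f hf hne ⟨s, hs, hes, hfs⟩ =>
    hE.2 e (hFE he) f (hFE hf) hne ⟨s, hs.mono hGH, hes, hfs⟩⟩

lemma CliqueDisjointEdges.insert_edge {e : Sym2 V} (hE : CliqueDisjointEdges G E)
    (he : e ∈ G.edgeSet)
    (hsep : ∀ f ∈ E, f ≠ e → ¬ ∃ s : Set V, G.IsClique s ∧ (∀ x ∈ e, x ∈ s) ∧ (∀ x ∈ f, x ∈ s)) :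
    CliqueDisjointEdges G (insert e E) := by
  refine ⟨Set.insert_subset he hE.1, ?_⟩
  rintro f (rfl | hf) g (rfl | hg) hfg ⟨s, hs, hfs, hgs⟩
  · exact hfg rfl
  · exact hsep g hg (Ne.symm hfg) ⟨s, hs, hfs, hgs⟩
  · exact hsep f hf hfg ⟨s, hs, hgs, hfs⟩
  · exact hE.2 f hf g hg hfg ⟨s, hs, hfs, hgs⟩

lemma CliqueDisjointEdges.ncard_le_ncard_not_subset_add_one [Finite V]
    (hE : CliqueDisjointEdges G E) {s : Set V} (hs : G.IsClique s) :
    E.ncard ≤ {f ∈ E | ¬ ∀ x ∈ f, x ∈ s}.ncard + 1 := by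
  have hinside : (E \ {f ∈ E | ¬ ∀ x ∈ f, x ∈ s}).ncard ≤ 1 := by
    refine (Set.ncard_le_one).mpr fun e he f hf => by_contra fun hne => hE.2 e he.1 f hf.1 hne ?_
    exact ⟨s, hs, by simpa [he.1] using he.2, by simpa [hf.1] using hf.2⟩
  have := Set.ncard_sdiff_add_ncard_of_subset (Set.sep_subset E fun f => ¬ ∀ x ∈ f, x ∈ s)
  omega

end CliqueDisjointEdges

lemma etaNum_le_of_embedding [Finite V] {G' : SimpleGraph W} (φ : G' ↪g G) :
    etaNum G' ≤ etaNum G := by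
  have : Finite W := Finite.of_injective φ φ.injective
  obtain ⟨E, hE, hcard⟩ := exists_cliqueDisjointEdges_ncard_eq_etaNum G'
  rw [← hcard, ← Set.ncard_image_of_injective E (Sym2.map.injective φ.injective)]
  exact (hE.map φ).ncard_le_etaNum

lemma card_connectedComponent_le_etaNum [Finite V] (h : ∀ u, ∃ w, G.Adj u w) :
    Nat.card G.ConnectedComponent ≤ etaNum G := by
  choose nbr hnbr using h
  choose rep hrep using fun c : G.ConnectedComponent => c.exists_rep
  set edge : G.ConnectedComponent → Sym2 V := fun c => s(rep c, nbr (rep c))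
  have hrep_mem : ∀ c, rep c ∈ edge c := fun c => Sym2.mem_mk_left _ _
  have hmk : ∀ c, ∀ x ∈ edge c, G.connectedComponentMk x = c := by
    intro c x hx
    rcases Sym2.mem_iff.mp hx with rfl | rfl
    · exact hrep c
    · exact (ConnectedComponent.eq.mpr (hnbr (rep c)).reachable).symm.trans (hrep c)
  have hinj : Function.Injective edge := fun c c' h =>
    (hmk c _ (hrep_mem c)).symm.trans (hmk c' _ (h ▸ hrep_mem c))
  have hCD : CliqueDisjointEdges G (Set.range edge) := by
    refine ⟨by rintro _ ⟨c, rfl⟩; exact hnbr (rep c), ?_⟩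
    rintro _ ⟨c, rfl⟩ _ ⟨c', rfl⟩ hne ⟨s, hs, hcs, hc's⟩
    refine hne (congrArg edge ?_)
    rw [← hmk c _ (hrep_mem c), ← hmk c' _ (hrep_mem c')]
    exact ConnectedComponent.eq.mpr (hs.reachable (hcs _ (hrep_mem c)) (hc's _ (hrep_mem c')))
  rw [← Set.ncard_range_of_injective hinj]
  exact hCD.ncard_le_etaNum

section AddNbrEdges

variable {v a b : V}

lemma CliqueDisjointEdges.of_addNbrEdges {E : Set (Sym2 V)}
    (hE : CliqueDisjointEdges (addNbrEdges G v) E) :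
    CliqueDisjointEdges G {f ∈ E | ¬ ∀ x ∈ f, x ∈ insert v (G.neighborSet v)} := by
  refine hE.of_le_of_subset (addNbrEdges_le v) (Set.sep_subset _ _) ?_
  rintro ⟨x, y⟩ ⟨hf, hout⟩
  refine (hE.1 hf).resolve_right ?_
  rintro ⟨-, hx, hy⟩
  exact hout fun z hz => (Sym2.mem_iff.mp hz).elim (· ▸ Set.mem_insert_of_mem v hx)
    (· ▸ Set.mem_insert_of_mem v hy)

lemma CliqueDisjointEdges.insert_insert_of_not_adj {F : Set (Sym2 V)}
    (hF : CliqueDisjointEdges G F)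
    (hfar : ∀ f ∈ F, ∀ s : Set V, G.IsClique s → v ∈ s → ¬ ∀ x ∈ f, x ∈ s)
    (ha : G.Adj v a) (hb : G.Adj v b) (hne : a ≠ b) (hab : ¬ G.Adj a b) :
    CliqueDisjointEdges G (insert s(v, a) (insert s(v, b) F)) := by
  have hsep : ∀ c, ∀ f ∈ F, f ≠ s(v, c) →
      ¬ ∃ s : Set V, G.IsClique s ∧ (∀ x ∈ s(v, c), x ∈ s) ∧ (∀ x ∈ f, x ∈ s) :=
    fun c f hf _ ⟨s, hs, hcs, hfs⟩ => hfar f hf s hs (hcs v (Sym2.mem_mk_left v c)) hfs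
  refine (hF.insert_edge hb (hsep b)).insert_edge ha ?_
  rintro f (rfl | hf) hfa ⟨s, hs, has, hbs⟩
  · exact hab (hs (has a (Sym2.mem_mk_right v a)) (hbs b (Sym2.mem_mk_right v b)) hne)
  · exact hsep a f hf hfa ⟨s, hs, has, hbs⟩

theorem etaNum_addNbrEdges_lt [Finite V] (ha : G.Adj v a) (hb : G.Adj v b) (hne : a ≠ b)
    (hab : ¬ G.Adj a b) : etaNum (addNbrEdges G v) < etaNum G := by
  obtain ⟨E, hE, hcard⟩ := exists_cliqueDisjointEdges_ncard_eq_etaNum (addNbrEdges G v)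
  set N := insert v (G.neighborSet v)
  set F := {f ∈ E | ¬ ∀ x ∈ f, x ∈ N}
  have hfar : ∀ f ∈ F, ∀ s : Set V, G.IsClique s → v ∈ s → ¬ ∀ x ∈ f, x ∈ s :=
    fun f hf s hs hv hfs => hf.2 fun x hx => subset_insert_neighborSet_of_isClique hs hv (hfs x hx)
  have hnotin : ∀ c, G.Adj v c → s(v, c) ∉ F := fun c hc hf =>
    hf.2 fun x hx => (Sym2.mem_iff.mp hx).elim (· ▸ Set.mem_insert v _)
      (· ▸ Set.mem_insert_of_mem v hc)
  have hva_ne_vb : s(v, a) ≠ s(v, b) := fun h => hne (Sym2.congr_right.mp h)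
  have hcardF : (insert s(v, a) (insert s(v, b) F)).ncard = F.ncard + 2 := by
    rw [Set.ncard_insert_of_notMem, Set.ncard_insert_of_notMem (hnotin b hb)]
    rintro (h | h)
    exacts [hva_ne_vb h, hnotin a ha h]
  have hlt : (insert s(v, a) (insert s(v, b) F)).ncard ≤ etaNum G :=
    (hE.of_addNbrEdges.insert_insert_of_not_adj hfar ha hb hne hab).ncard_le_etaNum
  have hle : E.ncard ≤ F.ncard + 1 :=
    hE.ncard_le_ncard_not_subset_add_one (isClique_addNbrEdges_insert_neighborSet v)
  omega

end AddNbrEdges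

/-- for every integer `m ≥ 2`, the map `G ↦ (m − 1)·η(G)` is
`(reg, m)`-compatible. -/
theorem stmt8 (m : ℕ) (hm : 2 ≤ m) :
    RegCompatible m (fun V _ G => (m - 1) * etaNum G) := by
  refine ⟨fun V _ G => Nat.mul_le_mul_left _ (etaNum_le_of_embedding (Embedding.induce _)),
    fun V _ G hcomplete hnontrivial => ?_, fun V _ G ⟨u, w, hne, huw, hnadj⟩ => ?_⟩
  · have : Fintype G.ConnectedComponent := Fintype.ofFinite _
    have hadj : ∀ u, ∃ w, G.Adj u w := fun u =>
      (hnontrivial u).imp fun w ⟨hne, huw⟩ => hcomplete u w huw hne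
    calc ∑ᶠ c : G.ConnectedComponent, min (m - 1) (c.supp.ncard - 1)
        ≤ ∑ _c : G.ConnectedComponent, (m - 1) := by
          rw [finsum_eq_sum_of_fintype]
          exact Finset.sum_le_sum fun c _ => min_le_left _ _
      _ = (m - 1) * Nat.card G.ConnectedComponent := by
          rw [Finset.sum_const, smul_eq_mul, Finset.card_univ, Nat.card_eq_fintype_card, mul_comm]
      _ ≤ (m - 1) * etaNum G := Nat.mul_le_mul_left _ (card_connectedComponent_le_etaNum hadj)
  · obtain ⟨v, a, b, ha, hb, hab, hnab⟩ := huw.exists_adj_adj_not_adj hne hnadj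
    refine ⟨v, internalVtx_of_adj_of_adj ha hb hab hnab, Or.inl ⟨?_, ?_⟩⟩
    · exact Nat.mul_le_mul_left _ (etaNum_le_of_embedding (Embedding.induce _))
    · exact Nat.mul_lt_mul_of_pos_left (etaNum_addNbrEdges_lt ha hb hab hnab) (by omega)
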